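/- arXiv:1606.08320 — 4 statements merged into one kernel-verified Lean document; each statement's English description precedes it below -/
import Mathlib

section
/- Let (P, d_P) and (M, d_M) be metric spaces and let ρ : P → M be an L-Lipschitz proper map for some constant L ≥ 1 (proper means that preimages of compact sets are compact). If every locally Lipschitz divergent path γ : [0,1) → M has infinite length, then every locally Lipschitz divergent path γ : [0,1) → P has infinite length; in particular, if (M, d_M) is divergent-paths complete, then so is (P, d_P). -/
open scoped Topology ENNReal
open Set

noncomputable section

/-- A path `γ : [a,b) → X` is divergent if it eventually leaves every compact subset of `X`. -/
def IsDivergentPathOn {X : Type*} [TopologicalSpace X] (γ : ℝ → X) (a b : ℝ) : Prop :=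
  ∀ K : Set X, IsCompact K → ∃ T : ℝ, a ≤ T ∧ T < b ∧ ∀ t : ℝ, T ≤ t → t < b → γ t ∉ K

/-- Let `(P, d_P)` and `(M, d_M)` be metric spaces and let `ρ : P → M` be an
`L`-Lipschitz proper map for some `L ≥ 1` (proper: preimages of compact sets are compact).
If every locally Lipschitz divergent path `γ : [0,1) → M` has infinite length, then every
locally Lipschitz divergent path `γ : [0,1) → P` has infinite length; i.e. if `(M, d_M)` is
divergent-paths complete, then so is `(P, d_P)`.  (The length of a path is its total variation
`eVariationOn`, the supremum over finite partitions of the sums of consecutive distances.) -/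
theorem divergent_paths_complete_of_lipschitz_proper
    {P M : Type*} [MetricSpace P] [MetricSpace M]
    (ρ : P → M) (L : ℝ) (hL : 1 ≤ L)
    (hlip : ∀ x y : P, dist (ρ x) (ρ y) ≤ L * dist x y)
    (hproper : ∀ K : Set M, IsCompact K → IsCompact (ρ ⁻¹' K))
    (hM : ∀ γ : ℝ → M, LocallyLipschitzOn (Set.Ico 0 1) γ → IsDivergentPathOn γ 0 1 →
      eVariationOn γ (Set.Ico 0 1) = ⊤) :
    ∀ γ : ℝ → P, LocallyLipschitzOn (Set.Ico 0 1) γ → IsDivergentPathOn γ 0 1 →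
      eVariationOn γ (Set.Ico 0 1) = ⊤ := by
  intro γ hγlip hγdiv
  have hρ : LipschitzWith L.toNNReal ρ := by
    intro x y
    rw [edist_dist, edist_dist, ← ENNReal.ofReal_coe_nnreal, Real.coe_toNNReal _ (by linarith), ← ENNReal.ofReal_mul (by linarith)]
    exact ENNReal.ofReal_le_ofReal (hlip x y)
  have hcomp : eVariationOn (ρ ∘ γ) (Set.Ico 0 1) = ⊤ := by
    apply hM
    · intro x hx
      obtain ⟨K, t, ht, hK⟩ := hγlip hx
      exact ⟨L.toNNReal * K, t, ht, (hρ.comp_lipschitzOnWith hK)⟩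
    · intro K hK
      obtain ⟨T, hT0, hT1, hT⟩ := hγdiv (ρ ⁻¹' K) (hproper K hK)
      exact ⟨T, hT0, hT1, fun t ht ht' => hT t ht ht'⟩
  have hle := (hρ.lipschitzOnWith (s := γ '' Set.Ico 0 1)).comp_eVariationOn_le
    (Set.mapsTo_image γ _)
  rw [hcomp] at hle
  by_contra h
  exact (ENNReal.mul_ne_top ENNReal.coe_ne_top h) (top_le_iff.mp hle)

end
end

section
/- Let (X, d) be a locally compact length metric space. Then the following assertions are equivalent: (1) (X,d) is complete as a metric space; (2) (X,d) satisfies the Heine–Borel property, i.e. every closed metric ball in X is compact; (3) (X,d) is geodesically complete, i.e. every constant speed geodesic γ : [0,a) → X extends to a continuous path γ̄ : [0,a] → X; (4) every Lipschitz path γ : [0,a) → X extends to a continuous path γ̄ : [0,a] → X; (5) (X,d) is divergent-paths complete, i.e. every locally Lipschitz divergent path γ : [0,a) → X has infinite length. -/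
/-
Completeness gives Heine–Borel: let `R` be the supremum of the radii of the compact balls about
`x`. In a length space the balls of radius `< R` are `ε`-dense in the ball of radius `R`, which is
therefore totally bounded, hence compact when `X` is complete; local compactness then lets a
compact ball grow a little, so `R` cannot be finite.

If `X` is not complete, the same ball of radius `R` is totally bounded but not compact, so some
point `ξ` of the completion outside `X` lies at distance exactly `R` from `x`, while every ball
about `x` of radius `< R` is compact. Compactness provides midpoints on the way to `ξ`, and
repeated bisection yields a path `γ : [0,1) → X` with `d(γ s, γ t) = R |s - t|` converging to `ξ`
in the completion: a geodesic that cannot be extended to `1`, and a divergent path of finite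
length.

`(1) → (4)` is the extension of uniformly continuous maps into complete spaces, and
`(2) → (5)` holds because a path of finite length stays inside a compact ball.
-/

open scoped Topology ENNReal NNReal
open Set

noncomputable section

/-- `(X, d)` is a length metric space: the distance between two points is the infimum of the
lengths (total variations) of continuous paths joining them.  (Paths of infinite length do not
affect the infimum, so we may take the infimum over all continuous paths.) -/
def IsLengthMetricSpace (X : Type*) [MetricSpace X] : Prop :=
  ∀ x y : X,
    edist x y =
      ⨅ γ : {γ : ℝ → X // ContinuousOn γ (Set.Icc 0 1) ∧ γ 0 = x ∧ γ 1 = y},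
        eVariationOn γ.1 (Set.Icc 0 1)

/-- A constant speed geodesic `γ : [a,b) → X`: a Lipschitz path which has constant speed (the
length of `γ` on `[s,t]` is `v·(t−s)` for a fixed `v ≥ 0`) and is locally minimizing (near each
parameter, the length of `γ` between two points equals the distance between them). -/
def IsConstantSpeedGeodesicOn {X : Type*} [MetricSpace X] (γ : ℝ → X) (a b : ℝ) : Prop :=
  (∃ C : ℝ≥0, LipschitzOnWith C γ (Set.Ico a b)) ∧
  (∃ v : ℝ, 0 ≤ v ∧ ∀ s t : ℝ, a ≤ s → s ≤ t → t < b →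
      eVariationOn γ (Set.Icc s t) = ENNReal.ofReal (v * (t - s))) ∧
  (∀ t₀ : ℝ, a ≤ t₀ → t₀ < b → ∃ ε > 0, ∀ s t : ℝ, a ≤ s → s ≤ t → t < b →
      t₀ - ε ≤ s → t ≤ t₀ + ε → eVariationOn γ (Set.Icc s t) = edist (γ s) (γ t))


open Filter Metric

section General

variable {X Y : Type*}

theorem UniformContinuousOn.continuousOn_extendFrom_closure [UniformSpace X] [UniformSpace Y]
    [CompleteSpace Y] {f : X → Y} {s : Set X} (hf : UniformContinuousOn f s) :
    ContinuousOn (extendFrom s f) (closure s) := by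
  refine continuousOn_extendFrom subset_rfl fun x hx => ?_
  have := mem_closure_iff_nhdsWithin_neBot.1 hx
  exact CompleteSpace.complete
    ((cauchy_nhds.mono nhdsWithin_le_nhds).map_of_le hf inf_le_right)

theorem cauchySeq_of_dist_le_mul [PseudoMetricSpace X] [PseudoMetricSpace Y] {u : ℕ → X}
    {v : ℕ → Y} (hv : CauchySeq v) (C : ℝ)
    (h : ∀ m n, dist (u m) (u n) ≤ C * dist (v m) (v n)) : CauchySeq u := by
  rw [cauchySeq_iff_tendsto_dist_atTop_0] at hv ⊢
  exact squeeze_zero (fun _ => dist_nonneg) (fun p => h p.1 p.2) (by simpa using hv.const_mul C)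

theorem dist_eq_abs_sub_mul_of_dist_succ_le [PseudoMetricSpace X] {c : ℕ → X} {N : ℕ} {δ : ℝ}
    (hstep : ∀ k < N, dist (c k) (c (k + 1)) ≤ δ) (hends : N * δ ≤ dist (c 0) (c N))
    {k l : ℕ} (hk : k ≤ N) (hl : l ≤ N) : dist (c k) (c l) = |(k : ℝ) - l| * δ := by
  have upper : ∀ {i j : ℕ}, i ≤ j → j ≤ N → dist (c i) (c j) ≤ (j - i : ℝ) * δ := by
    intro i j hij hj
    calc dist (c i) (c j) ≤ ∑ m ∈ Finset.Ico i j, dist (c m) (c (m + 1)) :=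
          dist_le_Ico_sum_dist c hij
      _ ≤ ∑ _m ∈ Finset.Ico i j, δ :=
          Finset.sum_le_sum fun m hm => hstep m (by have := (Finset.mem_Ico.1 hm).2; omega)
      _ = (j - i : ℝ) * δ := by simp [Nat.cast_sub hij]
  wlog hkl : k ≤ l generalizing k l
  · rw [dist_comm, this hl hk (by omega), abs_sub_comm]
  have hkl' : (k : ℝ) ≤ l := by exact_mod_cast hkl
  rw [abs_of_nonpos (by linarith), neg_sub]
  refine le_antisymm (upper hkl hl) ?_
  have h0k : dist (c 0) (c k) ≤ k * δ := by simpa using upper (Nat.zero_le k) hk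
  linarith [upper hl le_rfl, dist_triangle4 (c 0) (c k) (c l) (c N)]

end General

section Paths

variable {X Y : Type*}

theorem LipschitzOnWith.eVariationOn_le [PseudoEMetricSpace X] {C : ℝ≥0} {f : ℝ → X}
    {s : Set ℝ} {a b : ℝ} (hf : LipschitzOnWith C f s) (hs : s ⊆ Icc a b) :
    eVariationOn f s ≤ C * ENNReal.ofReal (b - a) := by
  refine (hf.comp_eVariationOn_le (mapsTo_id s)).trans ?_
  gcongr
  rcases le_or_gt a b with hab | hba
  · refine (eVariationOn.mono id hs).trans_eq ?_
    simp
  · rw [Icc_eq_empty_of_lt hba, subset_empty_iff] at hs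
    simp [hs]

theorem isConstantSpeedGeodesicOn_of_dist_eq [MetricSpace X] {γ : ℝ → X} {a b R : ℝ}
    (hR : 0 ≤ R) (h : ∀ s ∈ Ico a b, ∀ t ∈ Ico a b, dist (γ s) (γ t) = R * |s - t|) :
    IsConstantSpeedGeodesicOn γ a b := by
  have hlip : LipschitzOnWith R.toNNReal γ (Ico a b) := LipschitzOnWith.of_dist_le_mul
    fun s hs t ht => by rw [h s hs t ht, Real.coe_toNNReal _ hR, Real.dist_eq]
  have hvar : ∀ s t, a ≤ s → s ≤ t → t < b →
      eVariationOn γ (Icc s t) = edist (γ s) (γ t) ∧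
        edist (γ s) (γ t) = ENNReal.ofReal (R * (t - s)) := by
    intro s t hs hst ht
    have hsub : Icc s t ⊆ Ico a b := Icc_subset_Ico hs ht
    have hedist : edist (γ s) (γ t) = ENNReal.ofReal (R * (t - s)) := by
      rw [edist_dist, h s (hsub (left_mem_Icc.2 hst)) t (hsub (right_mem_Icc.2 hst)),
        abs_sub_comm, abs_of_nonneg (sub_nonneg.2 hst)]
    refine ⟨le_antisymm ?_ (eVariationOn.edist_le γ (left_mem_Icc.2 hst) (right_mem_Icc.2 hst)),
      hedist⟩
    calc eVariationOn γ (Icc s t) ≤ R.toNNReal * ENNReal.ofReal (t - s) :=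
          (hlip.mono hsub).eVariationOn_le subset_rfl
      _ = edist (γ s) (γ t) := by rw [hedist, ENNReal.ofReal_mul hR]; rfl
  refine ⟨⟨_, hlip⟩, ⟨R, hR, fun s t hs hst ht => ?_⟩,
    fun _ _ _ => ⟨1, one_pos, fun s t hs hst ht _ _ => (hvar s t hs hst ht).1⟩⟩
  exact (hvar s t hs hst ht).1.trans (hvar s t hs hst ht).2

theorem eVariationOn_Ico_eq_top_of_isDivergentPathOn [MetricSpace X] [ProperSpace X]
    {γ : ℝ → X} {a b : ℝ} (hdiv : IsDivergentPathOn γ a b) : eVariationOn γ (Ico a b) = ⊤ := by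
  by_contra hV
  obtain ⟨T, haT, hTb, hout⟩ :=
    hdiv _ (isCompact_closedBall (γ a) (eVariationOn γ (Ico a b)).toReal)
  refine hout T le_rfl hTb ?_
  rw [mem_closedBall, dist_comm, dist_edist]
  exact ENNReal.toReal_mono hV (eVariationOn.edist_le γ ⟨le_rfl, haT.trans_lt hTb⟩ ⟨haT, hTb⟩)

variable [TopologicalSpace X] [TopologicalSpace Y] [T2Space Y] {e : X → Y} {γ : ℝ → X}
  {a b : ℝ} {ξ : Y}

theorem isDivergentPathOn_of_tendsto_notMem_range (he : Continuous e) (hab : a < b)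
    (hξ : ξ ∉ range e) (hγ : Tendsto (e ∘ γ) (𝓝[<] b) (𝓝 ξ)) : IsDivergentPathOn γ a b := by
  intro K hK
  have hKc : (e '' K)ᶜ ∈ 𝓝 ξ :=
    (hK.image he).isClosed.isOpen_compl.mem_nhds fun h => hξ (image_subset_range e K h)
  obtain ⟨l, hl, hsub⟩ := mem_nhdsLT_iff_exists_Ico_subset.1 (hγ hKc)
  exact ⟨max a l, le_max_left _ _, max_lt hab hl, fun t hlt htb htK =>
    hsub ⟨(le_max_right _ _).trans hlt, htb⟩ (mem_image_of_mem e htK)⟩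

theorem not_exists_continuousOn_extension_of_tendsto_notMem_range (he : Continuous e)
    (hab : a < b) (hξ : ξ ∉ range e) (hγ : Tendsto (e ∘ γ) (𝓝[<] b) (𝓝 ξ)) :
    ¬ ∃ γbar : ℝ → X, ContinuousOn γbar (Icc a b) ∧ ∀ t ∈ Ico a b, γbar t = γ t := by
  rintro ⟨γbar, hcont, hext⟩
  have hlim : Tendsto γ (𝓝[<] b) (𝓝 (γbar b)) := by
    rw [← nhdsWithin_Ico_eq_nhdsLT hab]
    exact ((hcont b (right_mem_Icc.2 hab.le)).mono Ico_subset_Icc_self).congr'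
      (eventually_nhdsWithin_of_forall hext)
  exact hξ ⟨γbar b, tendsto_nhds_unique ((he.tendsto _).comp hlim) hγ⟩

end Paths

section DyadicChain

variable {Y : Type*} (mid : Y → Y → Y) (x ξ : Y)

/-- `dyadicChain mid x ξ n k` is the point of parameter `k / 2 ^ n` on the way from `x` (at `0`)
to `ξ` (at `1`): the points of level `n + 1` with odd index are the `mid`-points of neighbours of
level `n`. -/
def dyadicChain : ℕ → ℕ → Y
  | 0, k => if k = 0 then x else ξ
  | n + 1, k =>
    if Even k then dyadicChain n (k / 2)
    else mid (dyadicChain n (k / 2)) (dyadicChain n (k / 2 + 1))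

theorem dyadicChain_succ_two_mul (n k : ℕ) :
    dyadicChain mid x ξ (n + 1) (2 * k) = dyadicChain mid x ξ n k := by
  simp [dyadicChain]

theorem dyadicChain_succ_two_mul_add_one (n k : ℕ) :
    dyadicChain mid x ξ (n + 1) (2 * k + 1) =
      mid (dyadicChain mid x ξ n k) (dyadicChain mid x ξ n (k + 1)) := by
  simp [dyadicChain, Nat.add_div_of_dvd_right]

@[simp]
theorem dyadicChain_zero_right (n : ℕ) : dyadicChain mid x ξ n 0 = x := by
  induction n with
  | zero => simp [dyadicChain]
  | succ n ih => simpa using (dyadicChain_succ_two_mul mid x ξ n 0).trans ih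

@[simp]
theorem dyadicChain_two_pow (n : ℕ) : dyadicChain mid x ξ n (2 ^ n) = ξ := by
  induction n with
  | zero => simp [dyadicChain]
  | succ n ih => rw [pow_succ', dyadicChain_succ_two_mul, ih]

theorem dyadicChain_add_mul_two_pow (n p k : ℕ) :
    dyadicChain mid x ξ (n + p) (k * 2 ^ p) = dyadicChain mid x ξ n k := by
  induction p with
  | zero => simp
  | succ p ih => rw [← add_assoc, pow_succ', mul_left_comm, dyadicChain_succ_two_mul, ih]

variable [MetricSpace Y] {mid x ξ} {A : Set Y} {R : ℝ}

theorem mid_mem_and_dist_le (hR : 0 < R)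
    (hmid : ∀ p ∈ A, ∀ q, dist x p + dist p q / 2 < R →
      mid p q ∈ A ∧ dist p (mid p q) ≤ dist p q / 2 ∧ dist (mid p q) q ≤ dist p q / 2)
    {p q : Y} (hp : p ∈ A) {n m : ℕ} (hm : m < 2 ^ n) (hxp : dist x p = m * (R / 2 ^ n))
    (hpq : dist p q = R / 2 ^ n) :
    mid p q ∈ A ∧ dist p (mid p q) ≤ R / 2 ^ (n + 1) ∧ dist (mid p q) q ≤ R / 2 ^ (n + 1) := by
  have hlt : dist x p + dist p q / 2 < R := by
    have : (2 * m + 1 : ℝ) < 2 ^ n * 2 := by exact_mod_cast (by omega : 2 * m + 1 < 2 ^ n * 2)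
    rw [hxp, hpq]
    field_simp
    nlinarith
  rw [pow_succ, ← div_div, ← hpq]
  exact hmid p hp q hlt

theorem dyadicChain_mem_and_dist_eq (hR : 0 < R) (hxξ : dist x ξ = R) (hx : x ∈ A)
    (hmid : ∀ p ∈ A, ∀ q, dist x p + dist p q / 2 < R →
      mid p q ∈ A ∧ dist p (mid p q) ≤ dist p q / 2 ∧ dist (mid p q) q ≤ dist p q / 2)
    (n : ℕ) : (∀ k < 2 ^ n, dyadicChain mid x ξ n k ∈ A) ∧
      ∀ k ≤ 2 ^ n, ∀ l ≤ 2 ^ n, dist (dyadicChain mid x ξ n k) (dyadicChain mid x ξ n l) =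
        |(k : ℝ) - l| * (R / 2 ^ n) := by
  induction n with
  | zero =>
    refine ⟨fun k hk => by simp_all, fun k hk l hl => ?_⟩
    interval_cases k <;> interval_cases l <;> simp [dyadicChain, hxξ, dist_comm ξ]
  | succ n ih =>
    obtain ⟨hA, hdist⟩ := ih
    have hstep := fun m (hm : m < 2 ^ n) => mid_mem_and_dist_le hR hmid (hA m hm) hm
      (by simpa using hdist 0 (Nat.zero_le _) m hm.le) (by rw [hdist m hm.le (m + 1) hm]; simp)
    refine ⟨fun k hk => ?_, fun k hk l hl => ?_⟩
    · rw [pow_succ] at hk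
      obtain ⟨m, rfl | rfl⟩ := Nat.even_or_odd' k
      · rw [dyadicChain_succ_two_mul]; exact hA m (by omega)
      · rw [dyadicChain_succ_two_mul_add_one]; exact (hstep m (by omega)).1
    refine dist_eq_abs_sub_mul_of_dist_succ_le (fun k hk => ?_) ?_ hk hl
    · rw [pow_succ] at hk
      obtain ⟨m, rfl | rfl⟩ := Nat.even_or_odd' k
      · rw [dyadicChain_succ_two_mul_add_one, dyadicChain_succ_two_mul]
        exact (hstep m (by omega)).2.1
      · rw [show 2 * m + 1 + 1 = 2 * (m + 1) by ring, dyadicChain_succ_two_mul_add_one,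
          dyadicChain_succ_two_mul]
        exact (hstep m (by omega)).2.2
    · simp [hxξ, mul_div_cancel₀]

theorem dist_dyadicChain_eq
    (hlevel : ∀ n, ∀ k ≤ 2 ^ n, ∀ l ≤ 2 ^ n,
      dist (dyadicChain mid x ξ n k) (dyadicChain mid x ξ n l) = |(k : ℝ) - l| * (R / 2 ^ n))
    {n m k l : ℕ} (hk : k ≤ 2 ^ n) (hl : l ≤ 2 ^ m) :
    dist (dyadicChain mid x ξ n k) (dyadicChain mid x ξ m l) =
      R * |(k : ℝ) / 2 ^ n - l / 2 ^ m| := by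
  rw [← dyadicChain_add_mul_two_pow mid x ξ n m k, ← dyadicChain_add_mul_two_pow mid x ξ m n l,
    add_comm m n, hlevel (n + m) _ (by rw [pow_add]; exact Nat.mul_le_mul_right _ hk) _
      (by rw [pow_add, mul_comm (2 ^ n)]; exact Nat.mul_le_mul_right _ hl)]
  have hsplit : (k : ℝ) / 2 ^ n - l / 2 ^ m = (k * 2 ^ m - l * 2 ^ n) / 2 ^ (n + m) := by
    rw [pow_add]; field_simp
  rw [hsplit, abs_div, abs_of_pos (by positivity : (0 : ℝ) < 2 ^ (n + m))]
  push_cast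
  ring

theorem exists_dist_eq_mul_abs_of_midpoints [CompleteSpace Y] (hR : 0 < R) (hxξ : dist x ξ = R)
    (hx : x ∈ A) (hmid : ∀ p ∈ A, ∀ q, dist x p + dist p q / 2 < R →
      ∃ z ∈ A, dist p z ≤ dist p q / 2 ∧ dist z q ≤ dist p q / 2) :
    ∃ g : ℝ → Y, g 0 = x ∧ g 1 = ξ ∧
      ∀ s ∈ Icc (0 : ℝ) 1, ∀ t ∈ Icc (0 : ℝ) 1, dist (g s) (g t) = R * |s - t| := by
  choose! mid hmidA hmid₁ hmid₂ using hmid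
  have hlevel := fun n => (dyadicChain_mem_and_dist_eq (mid := mid) (ξ := ξ) hR hxξ hx
    (fun p hp q hq => ⟨hmidA p hp q hq, hmid₁ p hp q hq, hmid₂ p hp q hq⟩) n).2
  let u : ℝ → ℕ → Y := fun t n => dyadicChain mid x ξ n ⌊t * 2 ^ n⌋₊
  let q : ℝ → ℕ → ℝ := fun t n => (⌊t * 2 ^ n⌋₊ : ℝ) / 2 ^ n
  have hq : ∀ t ∈ Icc (0 : ℝ) 1, Tendsto (q t) atTop (𝓝 t) := fun t ht =>
    (tendsto_nat_floor_mul_div_atTop ht.1).comp (tendsto_pow_atTop_atTop_of_one_lt one_lt_two)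
  have hu : ∀ s ∈ Icc (0 : ℝ) 1, ∀ t ∈ Icc (0 : ℝ) 1, ∀ m n,
      dist (u s m) (u t n) = R * |q s m - q t n| := by
    have hfloor : ∀ t ∈ Icc (0 : ℝ) 1, ∀ n : ℕ, ⌊t * 2 ^ n⌋₊ ≤ 2 ^ n := fun t ht n =>
      Nat.floor_le_of_le (by push_cast; exact mul_le_of_le_one_left (by positivity) ht.2)
    exact fun s hs t ht m n => dist_dyadicChain_eq hlevel (hfloor s hs m) (hfloor t ht n)
  have hcauchy : ∀ t ∈ Icc (0 : ℝ) 1, CauchySeq (u t) := fun t ht =>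
    cauchySeq_of_dist_le_mul (hq t ht).cauchySeq R fun m n => (hu t ht t ht m n).le
  have : Nonempty Y := ⟨x⟩
  refine ⟨fun t => limUnder atTop (u t), ?_, ?_, fun s hs t ht => ?_⟩
  · exact tendsto_nhds_unique (hcauchy 0 (left_mem_Icc.2 zero_le_one)).tendsto_limUnder
      (by simp [u])
  · have hfloor : ∀ n : ℕ, ⌊(2 : ℝ) ^ n⌋₊ = 2 ^ n := fun n => by
      exact_mod_cast Nat.floor_natCast (R := ℝ) (2 ^ n)
    exact tendsto_nhds_unique (hcauchy 1 (right_mem_Icc.2 zero_le_one)).tendsto_limUnder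
      (by simp [u, hfloor])
  · exact tendsto_nhds_unique
      ((hcauchy s hs).tendsto_limUnder.dist (hcauchy t ht).tendsto_limUnder)
      (by simpa only [hu s hs t ht] using ((hq s hs).sub (hq t ht)).abs.const_mul R)

end DyadicChain

namespace IsLengthMetricSpace

variable {X : Type*} [MetricSpace X]

theorem exists_dist_eq_of_le (hlength : IsLengthMetricSpace X) (x y : X) {r δ : ℝ} (hr : 0 ≤ r)
    (hry : r ≤ dist x y) (hδ : 0 < δ) : ∃ z, dist x z = r ∧ dist z y ≤ dist x y - r + δ := by
  have hlt : (⨅ γ : {γ : ℝ → X // ContinuousOn γ (Icc 0 1) ∧ γ 0 = x ∧ γ 1 = y},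
      eVariationOn γ.1 (Icc 0 1)) < edist x y + ENNReal.ofReal δ := by
    rw [← hlength x y]
    exact ENNReal.lt_add_right (edist_ne_top x y) (by simp [hδ])
  obtain ⟨⟨γ, hcont, h0, h1⟩, hγ⟩ := iInf_lt_iff.1 hlt
  obtain ⟨t, ht, hγt⟩ := intermediate_value_Icc zero_le_one
    ((continuous_const.dist continuous_id).comp_continuousOn hcont)
    (show r ∈ Icc (dist x (γ 0)) (dist x (γ 1)) by simpa [h0, h1] using And.intro hr hry)
  refine ⟨γ t, hγt, ?_⟩
  have hsplit : edist x (γ t) + edist (γ t) y ≤ edist x y + ENNReal.ofReal δ := by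
    calc edist x (γ t) + edist (γ t) y
        ≤ eVariationOn γ (Icc 0 t) + eVariationOn γ (Icc t 1) := by
          rw [← h0, ← h1]
          exact add_le_add (eVariationOn.edist_le γ (left_mem_Icc.2 ht.1) (right_mem_Icc.2 ht.1))
            (eVariationOn.edist_le γ (left_mem_Icc.2 ht.2) (right_mem_Icc.2 ht.2))
      _ = eVariationOn γ (Icc 0 1) := by
          simpa using eVariationOn.Icc_add_Icc (s := univ) γ ht.1 ht.2 (mem_univ t)
      _ ≤ edist x y + ENNReal.ofReal δ := hγ.le
  simp only [edist_dist] at hsplit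
  rw [← ENNReal.ofReal_add dist_nonneg dist_nonneg, ← ENNReal.ofReal_add dist_nonneg hδ.le,
    ENNReal.ofReal_le_ofReal_iff (by positivity)] at hsplit
  linarith [show dist x (γ t) = r from hγt]

theorem closedBall_add_subset_thickening (hlength : IsLengthMetricSpace X) (x : X)
    {r δ ε : ℝ} (hr : 0 ≤ r) (hδ : 0 ≤ δ) (hδε : δ < ε) :
    closedBall x (r + δ) ⊆ thickening ε (closedBall x r) := by
  intro w hw
  rw [mem_closedBall'] at hw
  rw [mem_thickening_iff]
  rcases le_or_gt (dist x w) r with hwr | hwr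
  · exact ⟨w, mem_closedBall'.2 hwr, by simpa using hδ.trans_lt hδε⟩
  · obtain ⟨z, hz, hzw⟩ := hlength.exists_dist_eq_of_le x w hr hwr.le (half_pos (sub_pos.2 hδε))
    exact ⟨z, mem_closedBall'.2 hz.le, by rw [dist_comm]; linarith⟩

theorem exists_isCompact_closedBall_add [LocallyCompactSpace X] (hlength : IsLengthMetricSpace X)
    {x : X} {r : ℝ} (hr : 0 ≤ r) (hK : IsCompact (closedBall x r)) :
    ∃ δ > 0, IsCompact (closedBall x (r + δ)) := by
  obtain ⟨K, hKc, hsub⟩ := exists_compact_superset hK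
  obtain ⟨ε, hε, hthick⟩ := hK.exists_thickening_subset_open isOpen_interior hsub
  exact ⟨ε / 2, half_pos hε, hKc.of_isClosed_subset isClosed_closedBall
    ((hlength.closedBall_add_subset_thickening x hr (half_pos hε).le (half_lt_self hε)).trans
      (hthick.trans interior_subset))⟩

theorem totallyBounded_closedBall (hlength : IsLengthMetricSpace X) (x : X) {R : ℝ} (hR : 0 < R)
    (hlt : ∀ s < R, IsCompact (closedBall x s)) : TotallyBounded (closedBall x R) := by
  rw [Metric.totallyBounded_iff]
  intro ε hε
  set r := max 0 (R - ε / 4)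
  have hrR : r < R := max_lt hR (by linarith)
  obtain ⟨t, ht, hcover⟩ :=
    Metric.totallyBounded_iff.1 (hlt r hrR).totallyBounded (ε / 2) (half_pos hε)
  refine ⟨t, ht, fun w hw => ?_⟩
  have hw' : w ∈ closedBall x (r + (R - r)) := by rwa [add_sub_cancel]
  obtain ⟨z, hz, hwz⟩ := mem_thickening_iff.1 (hlength.closedBall_add_subset_thickening x
    (le_max_left _ _) (sub_nonneg.2 hrR.le)
    (show R - r < ε / 2 by linarith [le_max_right 0 (R - ε / 4)]) hw')
  obtain ⟨y, hy, hzy⟩ := mem_iUnion₂.1 (hcover hz)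
  exact mem_iUnion₂.2 ⟨y, hy, by rw [mem_ball] at *; linarith [dist_triangle w z y]⟩

theorem exists_forall_lt_isCompact_closedBall [LocallyCompactSpace X]
    (hlength : IsLengthMetricSpace X) {x : X} {r₀ : ℝ} (h : ¬ IsCompact (closedBall x r₀)) :
    ∃ R > 0, (∀ s < R, IsCompact (closedBall x s)) ∧ ¬ IsCompact (closedBall x R) := by
  let T := {r | IsCompact (closedBall x r)}
  have hmono : ∀ {s r}, s ≤ r → r ∈ T → s ∈ T := fun hsr hr =>
    hr.of_isClosed_subset isClosed_closedBall (closedBall_subset_closedBall hsr)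
  have hbdd : BddAbove T := ⟨r₀, fun r hr => not_lt.1 fun hlt => h (hmono hlt.le hr)⟩
  obtain ⟨ε, hε, hεT⟩ := exists_isCompact_closedBall x
  have hlt : ∀ s < sSup T, s ∈ T := fun s hs =>
    let ⟨r, hr, hsr⟩ := exists_lt_of_lt_csSup ⟨ε, hεT⟩ hs
    hmono hsr.le hr
  have hpos : 0 < sSup T := hε.trans_le (le_csSup hbdd hεT)
  refine ⟨sSup T, hpos, hlt, fun hK => ?_⟩
  obtain ⟨δ, hδ, hδT⟩ := hlength.exists_isCompact_closedBall_add hpos.le hK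
  linarith [le_csSup hbdd hδT]

theorem properSpace [LocallyCompactSpace X] [CompleteSpace X] (hlength : IsLengthMetricSpace X) :
    ProperSpace X := by
  refine ⟨fun x r => by_contra fun h => ?_⟩
  obtain ⟨R, hR, hlt, hR'⟩ := hlength.exists_forall_lt_isCompact_closedBall h
  exact hR' ((hlength.totallyBounded_closedBall x hR hlt).isCompact_of_isClosed isClosed_closedBall)

end IsLengthMetricSpace

open UniformSpace (Completion)

section Completion

variable {X : Type*} [MetricSpace X]

theorem mem_range_coe_of_dist_lt {x : X} {s : ℝ} (hK : IsCompact (closedBall x s))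
    {ζ : Completion X} (h : dist (x : Completion X) ζ < s) :
    ζ ∈ range ((↑) : X → Completion X) := by
  have hclosed : IsClosed (((↑) : X → Completion X) '' closedBall x s) :=
    (hK.image (Completion.continuous_coe X)).isClosed
  have hsub : ball (x : Completion X) s ∩ range ((↑) : X → Completion X) ⊆
      (↑) '' closedBall x s := by
    rintro _ ⟨hb, y, rfl⟩
    exact ⟨y, by simpa [Completion.dist_eq] using (mem_ball.1 hb).le, rfl⟩
  exact image_subset_range _ _ (hclosed.closure_subset_iff.2 hsub
    (Completion.denseRange_coe.open_subset_closure_inter isOpen_ball (mem_ball'.2 h)))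

theorem exists_mem_closure_image_coe_notMem_range {s : Set X} (hs : IsClosed s)
    (htb : TotallyBounded s) (hnc : ¬ IsCompact s) :
    ∃ ξ ∈ closure (((↑) : X → Completion X) '' s), ξ ∉ range ((↑) : X → Completion X) := by
  have hnclosed : ¬ IsClosed (((↑) : X → Completion X) '' s) := fun hcl =>
    hnc (Completion.coe_isometry.isEmbedding.isCompact_iff.2
      ((htb.image (Completion.uniformContinuous_coe X)).isCompact_of_isClosed hcl))
  obtain ⟨ξ, hξcl, hξnot⟩ : ∃ ξ ∈ closure (((↑) : X → Completion X) '' s),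
      ξ ∉ ((↑) : X → Completion X) '' s := by
    by_contra! h
    exact hnclosed (closure_subset_iff_isClosed.1 h)
  refine ⟨ξ, hξcl, ?_⟩
  rintro ⟨y, rfl⟩
  refine hξnot ⟨y, ?_, rfl⟩
  rwa [← hs.closure_eq, Completion.coe_isometry.isEmbedding.closure_eq_preimage_closure_image]

namespace IsLengthMetricSpace

theorem exists_mem_closedBall_dist_coe_le_add (hlength : IsLengthMetricSpace X) (p : X)
    (q : Completion X) {r ε : ℝ} (hr : 0 ≤ r) (hrq : r ≤ dist (p : Completion X) q)
    (hε : 0 < ε) :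
    ∃ z ∈ closedBall p r, dist (z : Completion X) q ≤ dist (p : Completion X) q - r + ε := by
  obtain ⟨y, hy⟩ := Metric.denseRange_iff.1 Completion.denseRange_coe q (ε / 4) (by positivity)
  have hpy := dist_triangle (p : Completion X) q y
  rw [Completion.dist_eq] at hpy
  rcases le_or_gt (dist p y) r with hyr | hyr
  · exact ⟨y, mem_closedBall'.2 hyr, by rw [dist_comm]; linarith⟩
  · obtain ⟨z, hz, hzy⟩ := hlength.exists_dist_eq_of_le p y hr hyr.le (half_pos hε)
    refine ⟨z, mem_closedBall'.2 hz.le, ?_⟩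
    have hzq := dist_triangle (z : Completion X) y q
    rw [Completion.dist_eq, dist_comm (y : Completion X)] at hzq
    linarith

theorem exists_mem_closedBall_dist_coe_le (hlength : IsLengthMetricSpace X) {p : X}
    {q : Completion X} {r : ℝ} (hr : 0 ≤ r) (hrq : r ≤ dist (p : Completion X) q)
    (hK : IsCompact (closedBall p r)) :
    ∃ z ∈ closedBall p r, dist (z : Completion X) q ≤ dist (p : Completion X) q - r := by
  obtain ⟨z, hz, hmin⟩ := hK.exists_isMinOn ⟨p, mem_closedBall_self hr⟩
    ((Completion.continuous_coe X).dist continuous_const).continuousOn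
  refine ⟨z, hz, le_of_forall_pos_le_add fun ε hε => ?_⟩
  obtain ⟨w, hw, hwq⟩ := hlength.exists_mem_closedBall_dist_coe_le_add p q hr hrq hε
  exact (hmin hw).trans hwq

theorem exists_dist_coe_eq_notMem_range [LocallyCompactSpace X] (hlength : IsLengthMetricSpace X)
    (hnc : ¬ CompleteSpace X) :
    ∃ (x : X) (ξ : Completion X) (R : ℝ), 0 < R ∧ ξ ∉ range ((↑) : X → Completion X) ∧
      dist (x : Completion X) ξ = R ∧ ∀ s < R, IsCompact (closedBall x s) := by
  obtain ⟨ξ₀, hξ₀⟩ : ∃ ξ₀ : Completion X, ξ₀ ∉ range ((↑) : X → Completion X) := by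
    by_contra! h
    refine hnc ((completeSpace_iff_isComplete_range
      (Completion.isUniformEmbedding_coe X).isUniformInducing).2 ?_)
    rw [eq_univ_of_forall h]
    exact isComplete_univ
  obtain ⟨x⟩ := Completion.denseRange_coe.nonempty_iff.2 ⟨ξ₀⟩
  obtain ⟨R, hR, hlt, hnotcpt⟩ := hlength.exists_forall_lt_isCompact_closedBall
    (r₀ := dist (x : Completion X) ξ₀ + 1)
    fun hK => hξ₀ (mem_range_coe_of_dist_lt hK (lt_add_one _))
  obtain ⟨ξ, hξcl, hξ⟩ := exists_mem_closure_image_coe_notMem_range isClosed_closedBall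
    (hlength.totallyBounded_closedBall x hR hlt) hnotcpt
  have hξR : dist (x : Completion X) ξ ≤ R := by
    have : closure (((↑) : X → Completion X) '' closedBall x R) ⊆
        closedBall (x : Completion X) R :=
      closure_minimal (image_subset_iff.2 fun y hy => by simpa [Completion.dist_eq] using hy)
        isClosed_closedBall
    simpa [dist_comm] using this hξcl
  refine ⟨x, ξ, R, hR, hξ, le_antisymm hξR (not_lt.1 fun hξR' => hξ ?_), hlt⟩
  exact mem_range_coe_of_dist_lt (hlt ((dist (x : Completion X) ξ + R) / 2) (by linarith))
    (by linarith)

theorem exists_geodesic_tendsto_notMem_range [LocallyCompactSpace X]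
    (hlength : IsLengthMetricSpace X) (hnc : ¬ CompleteSpace X) :
    ∃ (R : ℝ) (γ : ℝ → X) (ξ : Completion X), 0 ≤ R ∧ ξ ∉ range ((↑) : X → Completion X) ∧
      (∀ s ∈ Ico (0 : ℝ) 1, ∀ t ∈ Ico (0 : ℝ) 1, dist (γ s) (γ t) = R * |s - t|) ∧
      Tendsto (fun t => (γ t : Completion X)) (𝓝[<] 1) (𝓝 ξ) := by
  obtain ⟨x, ξ, R, hR, hξ, hxξ, hlt⟩ := hlength.exists_dist_coe_eq_notMem_range hnc
  have hmid : ∀ p ∈ range ((↑) : X → Completion X), ∀ q,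
      dist (x : Completion X) p + dist p q / 2 < R → ∃ z ∈ range ((↑) : X → Completion X),
        dist p z ≤ dist p q / 2 ∧ dist z q ≤ dist p q / 2 := by
    rintro _ ⟨p, rfl⟩ q hpq
    rw [Completion.dist_eq] at hpq
    obtain ⟨z, hz, hzq⟩ := hlength.exists_mem_closedBall_dist_coe_le (p := p) (q := q)
      (by positivity) (half_le_self dist_nonneg) ((hlt _ hpq).of_isClosed_subset
        isClosed_closedBall (closedBall_subset_closedBall' (by linarith [dist_comm p x])))
    exact ⟨z, mem_range_self z, by rwa [Completion.dist_eq, ← mem_closedBall'], by linarith⟩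
  obtain ⟨g, hg0, hg1, hg⟩ := exists_dist_eq_mul_abs_of_midpoints hR hxξ (mem_range_self x) hmid
  have hrange : ∀ t ∈ Ico (0 : ℝ) 1, ∃ y : X, (y : Completion X) = g t := fun t ht =>
    mem_range_coe_of_dist_lt (hlt (R * (1 + t) / 2) (by nlinarith [ht.2])) (by
      rw [← hg0, hg 0 (left_mem_Icc.2 zero_le_one) t (Ico_subset_Icc_self ht), zero_sub, abs_neg,
        abs_of_nonneg ht.1]
      nlinarith [ht.2])
  have : Nonempty X := ⟨x⟩
  choose! γ hγ using hrange
  have hcont : ContinuousOn g (Icc 0 1) := (LipschitzOnWith.of_dist_le_mul fun s hs t ht => by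
    rw [hg s hs t ht, Real.coe_toNNReal _ hR.le, Real.dist_eq]).continuousOn
  have hlim := (hcont 1 (right_mem_Icc.2 zero_le_one)).mono Ico_subset_Icc_self
  rw [ContinuousWithinAt, nhdsWithin_Ico_eq_nhdsLT one_pos, hg1] at hlim
  refine ⟨R, γ, ξ, hR.le, hξ, fun s hs t ht => ?_, hlim.congr' ?_⟩
  · rw [← Completion.dist_eq, hγ s hs, hγ t ht,
      hg s (Ico_subset_Icc_self hs) t (Ico_subset_Icc_self ht)]
  · filter_upwards [Ico_mem_nhdsLT one_pos] with t ht using (hγ t ht).symm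

end IsLengthMetricSpace

end Completion

/-- **Hopf–Rinow for locally compact length spaces.** Let `(X, d)` be a locally
compact length metric space. The following are equivalent:
(1) `(X,d)` is complete as a metric space;
(2) `(X,d)` has the Heine–Borel property: every closed metric ball is compact;
(3) `(X,d)` is geodesically complete: every constant speed geodesic `γ : [0,a) → X` extends to a
    continuous path `γ̄ : [0,a] → X`;
(4) every Lipschitz path `γ : [0,a) → X` extends to a continuous path `γ̄ : [0,a] → X`;
(5) `(X,d)` is divergent-paths complete: every locally Lipschitz divergent path `γ : [0,a) → X`
    has infinite length. -/
theorem hopf_rinow_locally_compact_length_space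
    {X : Type*} [MetricSpace X] [LocallyCompactSpace X]
    (hlength : IsLengthMetricSpace X) :
    List.TFAE
      [ CompleteSpace X,
        ∀ (x : X) (r : ℝ), IsCompact (Metric.closedBall x r),
        ∀ (a : ℝ) (γ : ℝ → X), 0 < a → IsConstantSpeedGeodesicOn γ 0 a →
          ∃ γbar : ℝ → X, ContinuousOn γbar (Set.Icc 0 a) ∧ ∀ t ∈ Set.Ico 0 a, γbar t = γ t,
        ∀ (a : ℝ) (γ : ℝ → X) (C : ℝ≥0), 0 < a → LipschitzOnWith C γ (Set.Ico 0 a) →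
          ∃ γbar : ℝ → X, ContinuousOn γbar (Set.Icc 0 a) ∧ ∀ t ∈ Set.Ico 0 a, γbar t = γ t,
        ∀ (a : ℝ) (γ : ℝ → X), 0 < a → LocallyLipschitzOn (Set.Ico 0 a) γ →
          IsDivergentPathOn γ 0 a → eVariationOn γ (Set.Ico 0 a) = ⊤ ] := by
  tfae_have 1 → 2 := fun _ => have := hlength.properSpace; isCompact_closedBall
  tfae_have 2 → 1 := fun h => have : ProperSpace X := ⟨h⟩; inferInstance
  tfae_have 2 → 5 := fun h _ _ _ _ hdiv =>
    have : ProperSpace X := ⟨h⟩; eVariationOn_Ico_eq_top_of_isDivergentPathOn hdiv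
  tfae_have 1 → 4 := fun _ a γ _ ha hγ => ⟨extendFrom (Ico 0 a) γ,
    closure_Ico ha.ne ▸ hγ.uniformContinuousOn.continuousOn_extendFrom_closure,
    extendFrom_extends hγ.continuousOn⟩
  tfae_have 4 → 3 := fun h a γ ha hγ => h a γ hγ.1.choose ha hγ.1.choose_spec
  tfae_have 3 → 1 := by
    intro h
    by_contra hnc
    obtain ⟨R, γ, ξ, hR, hξ, hdist, hlim⟩ := hlength.exists_geodesic_tendsto_notMem_range hnc
    exact not_exists_continuousOn_extension_of_tendsto_notMem_range (Completion.continuous_coe X)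
      one_pos hξ hlim (h 1 γ one_pos (isConstantSpeedGeodesicOn_of_dist_eq hR hdist))
  tfae_have 5 → 1 := by
    intro h
    by_contra hnc
    obtain ⟨R, γ, ξ, hR, hξ, hdist, hlim⟩ := hlength.exists_geodesic_tendsto_notMem_range hnc
    obtain ⟨C, hC⟩ := (isConstantSpeedGeodesicOn_of_dist_eq hR hdist).1
    have hdiv := isDivergentPathOn_of_tendsto_notMem_range (Completion.continuous_coe X)
      one_pos hξ hlim
    refine (hC.eVariationOn_le Ico_subset_Icc_self).not_gt ?_
    rw [h 1 γ one_pos (fun _ _ => ⟨C, _, self_mem_nhdsWithin, hC⟩) hdiv]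
    exact ENNReal.mul_lt_top ENNReal.coe_lt_top ENNReal.ofReal_lt_top
  tfae_finish
end
end

section
/- Let (X, d) be a metric space such that every locally Lipschitz divergent path γ : [0,a) → X has infinite length. Then every Lipschitz path γ : [0,a) → X, with 0 < a < ∞, extends to a continuous path γ̄ : [0,a] → X. -/
/-!
A Lipschitz path on `[0,a)` has finite length, so by hypothesis it is not divergent: it returns
to some compact set `K` for times arbitrarily close to `a`. Uniform continuity makes the image of
the Cauchy filter `𝓝[<] a` a Cauchy filter, which then has a cluster point in `K`, hence converges
to it; sending `a` to this limit gives the continuous extension.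
-/

open scoped Topology ENNReal NNReal
open Set Filter

noncomputable section

theorem LipschitzOnWith.locallyLipschitzOn {α β : Type*} [PseudoEMetricSpace α]
    [PseudoEMetricSpace β] {f : α → β} {s : Set α} {K : ℝ≥0} (hf : LipschitzOnWith K f s) :
    LocallyLipschitzOn s f :=
  fun _ _ ↦ ⟨K, s, self_mem_nhdsWithin, hf⟩

theorem LipschitzOnWith.boundedVariationOn_of_subset_Icc {E : Type*} [PseudoEMetricSpace E]
    {f : ℝ → E} {s : Set ℝ} {K : ℝ≥0} {a b : ℝ} (hf : LipschitzOnWith K f s)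
    (hs : s ⊆ Icc a b) : BoundedVariationOn f s :=
  hf.comp_boundedVariationOn (mapsTo_id s) ((BoundedVariationOn.id_Icc a b).mono hs)

theorem UniformContinuousOn.cauchy_map {α β : Type*} [UniformSpace α] [UniformSpace β]
    {f : α → β} {s : Set α} {l : Filter α} (hf : UniformContinuousOn f s) (hl : Cauchy l)
    (hls : l ≤ 𝓟 s) : Cauchy (map f l) :=
  cauchy_map_iff.2 ⟨hl.1, hf.mono_left <| le_inf hl.2 <|
    (Filter.prod_mono hls hls).trans_eq prod_principal_principal⟩

theorem Cauchy.exists_le_nhds_of_frequently_mem {α : Type*} [UniformSpace α] {l : Filter α}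
    {K : Set α} (hl : Cauchy l) (hK : IsCompact K) (hlK : ∃ᶠ y in l, y ∈ K) :
    ∃ x ∈ K, l ≤ 𝓝 x := by
  have := frequently_mem_iff_neBot.1 hlK
  obtain ⟨x, hxK, hx⟩ := hK (inf_le_right : l ⊓ 𝓟 K ≤ 𝓟 K)
  exact ⟨x, hxK, le_nhds_of_cauchy_adhp hl hx.of_inf_left⟩

theorem exists_isCompact_frequently_mem_of_not_isDivergentPathOn {X : Type*}
    [TopologicalSpace X] {γ : ℝ → X} {a b : ℝ} (hab : a < b) (hγ : ¬ IsDivergentPathOn γ a b) :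
    ∃ K, IsCompact K ∧ ∃ᶠ t in 𝓝[<] b, γ t ∈ K := by
  simp only [IsDivergentPathOn] at hγ
  push Not at hγ
  obtain ⟨K, hK, hreturns⟩ := hγ
  have hbasis : (𝓝[<] b).HasBasis (· < b) (Ico · b) := ⟨fun _ ↦ mem_nhdsLT_iff_exists_Ico_subset⟩
  refine ⟨K, hK, hbasis.frequently_iff.2 fun l hl ↦ ?_⟩
  obtain ⟨t, hlt, htb, htK⟩ := hreturns (max a l) (le_max_left a l) (max_lt hab hl)
  exact ⟨t, ⟨(le_max_right a l).trans hlt, htb⟩, htK⟩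

/-- Let `(X, d)` be a metric space such that every locally Lipschitz divergent
path `γ : [0,a) → X` has infinite length. Then every Lipschitz path `γ : [0,a) → X`, with
`0 < a < ∞`, extends to a continuous path `γ̄ : [0,a] → X`. -/
theorem lipschitz_path_extends_of_divergent_paths_complete
    {X : Type*} [MetricSpace X]
    (h : ∀ (a : ℝ) (γ : ℝ → X), 0 < a → LocallyLipschitzOn (Set.Ico 0 a) γ →
      IsDivergentPathOn γ 0 a → eVariationOn γ (Set.Ico 0 a) = ⊤)
    (a : ℝ) (ha : 0 < a) (γ : ℝ → X) (C : ℝ)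
    (hγ : ∀ s ∈ Set.Ico 0 a, ∀ t ∈ Set.Ico 0 a, dist (γ s) (γ t) ≤ C * |s - t|) :
    ∃ γbar : ℝ → X, ContinuousOn γbar (Set.Icc 0 a) ∧ ∀ t ∈ Set.Ico 0 a, γbar t = γ t := by
  have hlip : LipschitzOnWith (Real.toNNReal C) γ (Ico 0 a) :=
    LipschitzOnWith.of_dist_le_mul fun s hs t ht ↦ (hγ s hs t ht).trans <| by
      rw [Real.dist_eq]; gcongr; exact Real.le_coe_toNNReal C
  have hdiv : ¬ IsDivergentPathOn γ 0 a := fun hdiv ↦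
    hlip.boundedVariationOn_of_subset_Icc Ico_subset_Icc_self
      (h a γ ha hlip.locallyLipschitzOn hdiv)
  obtain ⟨K, hK, hγK⟩ := exists_isCompact_frequently_mem_of_not_isDivergentPathOn ha hdiv
  have hcauchy : Cauchy (map γ (𝓝[<] a)) :=
    hlip.uniformContinuousOn.cauchy_map (cauchy_nhds.mono nhdsWithin_le_nhds)
      (le_principal_iff.2 (Ico_mem_nhdsLT ha))
  obtain ⟨x, -, hx⟩ := hcauchy.exists_le_nhds_of_frequently_mem hK hγK
  refine ⟨Function.update γ a x, ?_, fun t ht ↦ Function.update_of_ne ht.2.ne _ _⟩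
  rw [continuousOn_update_iff, Icc_sdiff_right, nhdsWithin_Ico_eq_nhdsLT ha]
  exact ⟨hlip.continuousOn, fun _ ↦ hx⟩

end
end

section
/- Let (M, g) be a Riemannian manifold with (possibly nonempty) boundary, and let ρ : M → ℝ_{>0} be a smooth exhaustion function (all sublevel sets {ρ ≤ c} are compact) satisfying |∇ρ|_g ≤ 1/2 everywhere. Then g̃ := g − dρ ⊗ dρ is a Riemannian metric on M, and if j : (M, g̃) → ℝ^n is an isometric embedding, then the map i = (j, ρ) : M → ℝ^{n+1} is a proper isometric embedding of (M, g). -/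
open scoped Manifold Topology ENNReal
open Set

noncomputable section

/-- A smooth Riemannian metric on a smooth manifold `M` (possibly with boundary) modeled on the
model with corners `I`: a smoothly varying family of symmetric positive definite bilinear forms
on the tangent spaces.  Smoothness is encoded by requiring that the associated quadratic form
is a smooth function on the tangent bundle. -/
structure SmoothRiemannianMetric {E : Type*} [NormedAddCommGroup E] [NormedSpace ℝ E]
    {H : Type*} [TopologicalSpace H] (I : ModelWithCorners ℝ E H)
    (M : Type*) [TopologicalSpace M] [ChartedSpace H M] [IsManifold I (⊤ : ℕ∞) M] :
    Type _ where
  inner : ∀ x : M, TangentSpace I x →L[ℝ] TangentSpace I x →L[ℝ] ℝ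
  symm : ∀ (x : M) (v w : TangentSpace I x), inner x v w = inner x w v
  posDef : ∀ (x : M) (v : TangentSpace I x), v ≠ 0 → 0 < inner x v v
  smooth : ContMDiff I.tangent 𝓘(ℝ, ℝ) (⊤ : ℕ∞)
    (fun v : TangentBundle I M => inner v.proj v.snd v.snd)

variable {E : Type*} [NormedAddCommGroup E] [NormedSpace ℝ E]
    {H : Type*} [TopologicalSpace H] {I : ModelWithCorners ℝ E H}
    {M : Type*} [TopologicalSpace M] [ChartedSpace H M] [IsManifold I (⊤ : ℕ∞) M]

/-- The Riemannian length of a curve `γ` between parameters `a` and `b`, i.e. the integral of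
the `g`-norm of its velocity (the latter computed via `mfderiv`). -/
def riemannianLength (g : SmoothRiemannianMetric I M) (γ : ℝ → M) (a b : ℝ) : ℝ :=
  ∫ t in a..b,
    Real.sqrt (g.inner (γ t) (mfderiv 𝓘(ℝ, ℝ) I γ t (show TangentSpace 𝓘(ℝ, ℝ) t from (1:ℝ)))
      (mfderiv 𝓘(ℝ, ℝ) I γ t (show TangentSpace 𝓘(ℝ, ℝ) t from (1:ℝ))))

/-- A curve `γ : ℝ → M` is piecewise `C¹` on `[a,b]` if it is continuous there and there is a
partition `a = t₀ < t₁ < ⋯ < tₙ = b` such that `γ` is `C¹` on each subinterval. -/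
def PiecewiseC1On (I : ModelWithCorners ℝ E H) [IsManifold I (⊤ : ℕ∞) M] (γ : ℝ → M) (a b : ℝ) : Prop :=
  ContinuousOn γ (Icc a b) ∧
  ∃ (n : ℕ) (t : Fin (n + 1) → ℝ), StrictMono t ∧ t 0 = a ∧ t (Fin.last n) = b ∧
    ∀ i : Fin n, ContMDiffOn 𝓘(ℝ, ℝ) I 1 γ (Icc (t i.castSucc) (t i.succ))

/-- The intrinsic (Riemannian) distance between two points: the infimum of Riemannian lengths of
piecewise `C¹` paths joining them. -/
def riemannianDist (g : SmoothRiemannianMetric I M) (x y : M) : ℝ :=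
  sInf { L | ∃ γ : ℝ → M, PiecewiseC1On I γ 0 1 ∧ γ 0 = x ∧ γ 1 = y ∧
    L = riemannianLength g γ 0 1 }

/-- The intrinsic (Riemannian) distance between two points of a subset `S`, computed using only
piecewise `C¹` paths with values in `S`. -/
def riemannianDistOn (g : SmoothRiemannianMetric I M) (S : Set M) (x y : M) : ℝ :=
  sInf { L | ∃ γ : ℝ → M, PiecewiseC1On I γ 0 1 ∧ (∀ t ∈ Icc (0:ℝ) 1, γ t ∈ S) ∧
    γ 0 = x ∧ γ 1 = y ∧ L = riemannianLength g γ 0 1 }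

/-- `(M, g)` is metrically complete: every sequence which is Cauchy for the intrinsic Riemannian
distance converges (with respect to that distance). -/
def MetricallyComplete (g : SmoothRiemannianMetric I M) : Prop :=
  ∀ u : ℕ → M,
    (∀ ε : ℝ, 0 < ε → ∃ N : ℕ, ∀ p ≥ N, ∀ q ≥ N, riemannianDist g (u p) (u q) < ε) →
    ∃ x : M, ∀ ε : ℝ, 0 < ε → ∃ N : ℕ, ∀ n ≥ N, riemannianDist g (u n) x < ε

/-- `f : M → M'` realizes `(M,g)` as an isometrically embedded submanifold of `(M',g')`:
`f` is a smooth topological embedding and the pullback of `g'` along `f` is `g`.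
When `f` is regarded as an inclusion, this says `M ⊆ M'` and `g'|_M = g`, i.e. `(M',g')` is a
Riemannian extension of `(M,g)`. -/
def IsIsometricEmbedding {E : Type*} [NormedAddCommGroup E] [NormedSpace ℝ E]
    {H : Type*} [TopologicalSpace H] {I : ModelWithCorners ℝ E H}
    {M : Type*} [TopologicalSpace M] [ChartedSpace H M] [IsManifold I (⊤ : ℕ∞) M]
    {E' : Type*} [NormedAddCommGroup E'] [NormedSpace ℝ E']
    {H' : Type*} [TopologicalSpace H'] {I' : ModelWithCorners ℝ E' H'}
    {M' : Type*} [TopologicalSpace M'] [ChartedSpace H' M'] [IsManifold I' (⊤ : ℕ∞) M']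
    (g : SmoothRiemannianMetric I M) (g' : SmoothRiemannianMetric I' M') (f : M → M') : Prop :=
  ContMDiff I I' (⊤ : ℕ∞) f ∧ Topology.IsEmbedding f ∧
    ∀ (x : M) (v w : TangentSpace I x),
      g'.inner (f x) (mfderiv I I' f x v) (mfderiv I I' f x w) = g.inner x v w

open scoped RealInnerProductSpace

/-! Since `dρ(v)² ≤ g(v, v) / 4`, the form `g̃ = g − dρ ⊗ dρ` is still positive definite. The
differential of `i = (j, ρ)` is `(dj, dρ)`, so `i` pulls back the Euclidean metric to
`g̃ + dρ ⊗ dρ = g`; `i` is an embedding because its first component `j` is one, and it is proper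
because its last coordinate is `ρ`: the preimage of a compact set lies in a sublevel set of `ρ`. -/

theorem ContMDiff.contMDiff_mfderiv_apply {𝕜 : Type*} [NontriviallyNormedField 𝕜]
    {E : Type*} [NormedAddCommGroup E] [NormedSpace 𝕜 E]
    {H : Type*} [TopologicalSpace H] {I : ModelWithCorners 𝕜 E H}
    {M : Type*} [TopologicalSpace M] [ChartedSpace H M] [IsManifold I 1 M]
    {F : Type*} [NormedAddCommGroup F] [NormedSpace 𝕜 F] {m n : WithTop ℕ∞} {f : M → F}
    (hf : ContMDiff I 𝓘(𝕜, F) n f) (hmn : m + 1 ≤ n) :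
    ContMDiff I.tangent 𝓘(𝕜, F) m
      (fun v : TangentBundle I M => (show F from mfderiv I 𝓘(𝕜, F) f v.proj v.snd)) :=
  (contMDiff_snd_tangentBundle_modelSpace F 𝓘(𝕜, F)).comp (hf.contMDiff_tangentMap hmn)

namespace SmoothRiemannianMetric

variable {E : Type*} [NormedAddCommGroup E] [NormedSpace ℝ E]
  {H : Type*} [TopologicalSpace H] {I : ModelWithCorners ℝ E H}
  {M : Type*} [TopologicalSpace M] [ChartedSpace H M] [IsManifold I (⊤ : ℕ∞) M]

def subSq (g : SmoothRiemannianMetric I M) (α : ∀ x : M, TangentSpace I x →L[ℝ] ℝ)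
    (hα : ContMDiff I.tangent 𝓘(ℝ, ℝ) (⊤ : ℕ∞) fun v : TangentBundle I M => α v.proj v.snd)
    (hlt : ∀ (x : M) (v : TangentSpace I x), v ≠ 0 → α x v ^ 2 < g.inner x v v) :
    SmoothRiemannianMetric I M where
  inner x := g.inner x - (α x).smulRight (α x)
  symm x v w := by
    simp only [sub_apply, ContinuousLinearMap.smulRight_apply, smul_apply, smul_eq_mul,
      g.symm x v w, mul_comm]
  posDef x v hv := by
    simpa only [sub_apply, ContinuousLinearMap.smulRight_apply, smul_apply, smul_eq_mul, sub_pos,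
      ← sq] using hlt x v hv
  smooth := g.smooth.sub (hα.mul hα)

theorem subSq_inner_apply (g : SmoothRiemannianMetric I M) {α : ∀ x : M, TangentSpace I x →L[ℝ] ℝ}
    (hα : ContMDiff I.tangent 𝓘(ℝ, ℝ) (⊤ : ℕ∞) fun v : TangentBundle I M => α v.proj v.snd)
    (hlt : ∀ (x : M) (v : TangentSpace I x), v ≠ 0 → α x v ^ 2 < g.inner x v v)
    (x : M) (v w : TangentSpace I x) :
    (g.subSq α hα hlt).inner x v w = g.inner x v w - α x v * α x w :=
  rfl

end SmoothRiemannianMetric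

namespace EuclideanSpace

def snocCLM (n : ℕ) : EuclideanSpace ℝ (Fin n) × ℝ →L[ℝ] EuclideanSpace ℝ (Fin (n + 1)) :=
  LinearMap.toContinuousLinearMap
    { toFun := fun p => (EuclideanSpace.equiv (Fin (n + 1)) ℝ).symm
        (Fin.snoc (EuclideanSpace.equiv (Fin n) ℝ p.1) p.2)
      map_add' p q := by
        ext i
        induction i using Fin.lastCases <;> simp
      map_smul' c p := by
        ext i
        induction i using Fin.lastCases <;> simp }

def initCLM (n : ℕ) : EuclideanSpace ℝ (Fin (n + 1)) →L[ℝ] EuclideanSpace ℝ (Fin n) :=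
  LinearMap.toContinuousLinearMap
    { toFun := fun y => (EuclideanSpace.equiv (Fin n) ℝ).symm (Fin.init y)
      map_add' _ _ := rfl
      map_smul' _ _ := rfl }

@[simp]
theorem snocCLM_apply_castSucc {n : ℕ} (p : EuclideanSpace ℝ (Fin n) × ℝ) (k : Fin n) :
    snocCLM n p k.castSucc = p.1 k := by
  simp [snocCLM]

@[simp]
theorem snocCLM_apply_last {n : ℕ} (p : EuclideanSpace ℝ (Fin n) × ℝ) :
    snocCLM n p (Fin.last n) = p.2 := by
  simp [snocCLM]

@[simp]
theorem initCLM_snocCLM {n : ℕ} (p : EuclideanSpace ℝ (Fin n) × ℝ) :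
    initCLM n (snocCLM n p) = p.1 := by
  ext k
  simp [initCLM, Fin.init]

theorem le_norm_snocCLM {n : ℕ} (p : EuclideanSpace ℝ (Fin n) × ℝ) : p.2 ≤ ‖snocCLM n p‖ :=
  snocCLM_apply_last p ▸ (Real.le_norm_self _).trans (PiLp.norm_apply_le _ _)

theorem inner_snocCLM {n : ℕ} (p q : EuclideanSpace ℝ (Fin n) × ℝ) :
    ⟪snocCLM n p, snocCLM n q⟫ = ⟪p.1, q.1⟫ + p.2 * q.2 := by
  simp only [PiLp.inner_apply, RCLike.inner_apply, conj_trivial, Fin.sum_univ_castSucc,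
    snocCLM_apply_castSucc, snocCLM_apply_last]
  ring

end EuclideanSpace

theorem IsCompact.preimage_of_le_norm {X F : Type*} [TopologicalSpace X] [NormedAddCommGroup F]
    {i : X → F} (hi : Continuous i) {ρ : X → ℝ} (hρ : ∀ c : ℝ, IsCompact {x | ρ x ≤ c})
    (hle : ∀ x, ρ x ≤ ‖i x‖) {K : Set F} (hK : IsCompact K) : IsCompact (i ⁻¹' K) := by
  obtain ⟨C, hC⟩ := hK.isBounded.exists_norm_le
  exact (hρ C).of_isClosed_subset (hK.isClosed.preimage hi) fun x hx => (hle x).trans (hC _ hx)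

section

open EuclideanSpace

variable {E : Type*} [NormedAddCommGroup E] [NormedSpace ℝ E]
  {H : Type*} [TopologicalSpace H] {I : ModelWithCorners ℝ E H}
  {M : Type*} [TopologicalSpace M] [ChartedSpace H M] {n : ℕ}
  {j : M → EuclideanSpace ℝ (Fin n)} {ρ : M → ℝ}

theorem mfderiv_snocCLM_prodMk_apply {x : M}
    (hj : MDifferentiableAt I 𝓘(ℝ, EuclideanSpace ℝ (Fin n)) j x)
    (hρ : MDifferentiableAt I 𝓘(ℝ, ℝ) ρ x) (v : TangentSpace I x) :
    mfderiv I 𝓘(ℝ, EuclideanSpace ℝ (Fin (n + 1))) (fun y => snocCLM n (j y, ρ y)) x v =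
      snocCLM n (mfderiv I 𝓘(ℝ, EuclideanSpace ℝ (Fin n)) j x v, mfderiv I 𝓘(ℝ, ℝ) ρ x v) := by
  have hprod := hj.hasMFDerivAt.prodMk hρ.hasMFDerivAt
  rw [← modelWithCornersSelf_prod, chartedSpaceSelf_prod] at hprod
  exact DFunLike.congr_fun ((snocCLM n).hasMFDerivAt.comp x hprod).mfderiv v

end

theorem proper_embedding_from_exhaustion_general {m : ℕ} [NeZero m]
    {M : Type} [TopologicalSpace M] [ChartedSpace (EuclideanHalfSpace m) M]
    [IsManifold (𝓡∂ m) (⊤ : ℕ∞) M]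
    (g : SmoothRiemannianMetric (𝓡∂ m) M)
    (ρ : M → ℝ)
    (hρsmooth : ContMDiff (𝓡∂ m) 𝓘(ℝ, ℝ) (⊤ : ℕ∞) ρ)
    (hρexh : ∀ c : ℝ, IsCompact {x : M | ρ x ≤ c})
    (hρgrad : ∀ (x : M) (v : TangentSpace (𝓡∂ m) x),
      (show ℝ from mfderiv (𝓡∂ m) 𝓘(ℝ, ℝ) ρ x v) ^ 2 ≤ (1 / 4) * g.inner x v v) :
    -- `g̃ = g − dρ ⊗ dρ` is a Riemannian metric:
    ∃ gt : SmoothRiemannianMetric (𝓡∂ m) M,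
      (∀ (x : M) (v w : TangentSpace (𝓡∂ m) x),
        gt.inner x v w =
          g.inner x v w - (show ℝ from mfderiv (𝓡∂ m) 𝓘(ℝ, ℝ) ρ x v) *
            (show ℝ from mfderiv (𝓡∂ m) 𝓘(ℝ, ℝ) ρ x w)) ∧
      -- and for every isometric embedding `j` of `(M, g̃)` into `ℝⁿ`,
      ∀ (n : ℕ) (j : M → EuclideanSpace ℝ (Fin n)),
        ContMDiff (𝓡∂ m) 𝓘(ℝ, EuclideanSpace ℝ (Fin n)) (⊤ : ℕ∞) j →
        Topology.IsEmbedding j →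
        (∀ (x : M) (v w : TangentSpace (𝓡∂ m) x),
          ⟪(show EuclideanSpace ℝ (Fin n) from
              mfderiv (𝓡∂ m) 𝓘(ℝ, EuclideanSpace ℝ (Fin n)) j x v),
            (show EuclideanSpace ℝ (Fin n) from
              mfderiv (𝓡∂ m) 𝓘(ℝ, EuclideanSpace ℝ (Fin n)) j x w)⟫ = gt.inner x v w) →
        -- the map `i = (j, ρ)` is a proper isometric embedding of `(M, g)`:
        ∀ i : M → EuclideanSpace ℝ (Fin (n + 1)),
          (i = fun x => (EuclideanSpace.equiv (Fin (n + 1)) ℝ).symm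
              (Fin.snoc (EuclideanSpace.equiv (Fin n) ℝ (j x)) (ρ x))) →
          ContMDiff (𝓡∂ m) 𝓘(ℝ, EuclideanSpace ℝ (Fin (n + 1))) (⊤ : ℕ∞) i ∧
          Topology.IsEmbedding i ∧
          (∀ (x : M) (v w : TangentSpace (𝓡∂ m) x),
            ⟪(show EuclideanSpace ℝ (Fin (n + 1)) from
                mfderiv (𝓡∂ m) 𝓘(ℝ, EuclideanSpace ℝ (Fin (n + 1))) i x v),
              (show EuclideanSpace ℝ (Fin (n + 1)) from
                mfderiv (𝓡∂ m) 𝓘(ℝ, EuclideanSpace ℝ (Fin (n + 1))) i x w)⟫ = g.inner x v w) ∧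
          (∀ K : Set (EuclideanSpace ℝ (Fin (n + 1))), IsCompact K → IsCompact (i ⁻¹' K)) := by
  have hdρ_smooth := hρsmooth.contMDiff_mfderiv_apply (m := (⊤ : ℕ∞)) (by simp)
  have hdρ_lt (x : M) (v : TangentSpace (𝓡∂ m) x) (hv : v ≠ 0) :
      (show ℝ from mfderiv (𝓡∂ m) 𝓘(ℝ, ℝ) ρ x v) ^ 2 < g.inner x v v :=
    (hρgrad x v).trans_lt (by linarith [g.posDef x v hv])
  refine ⟨g.subSq (mfderiv (𝓡∂ m) 𝓘(ℝ, ℝ) ρ) hdρ_smooth hdρ_lt,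
    g.subSq_inner_apply hdρ_smooth hdρ_lt, ?_⟩
  intro n j hj hj_emb hj_iso i hi
  obtain rfl : i = fun x => EuclideanSpace.snocCLM n (j x, ρ x) := hi
  have hi_smooth := (EuclideanSpace.snocCLM n).contMDiff.comp (hj.prodMk_space hρsmooth)
  refine ⟨hi_smooth, ?_, fun x v w => ?_, fun K hK => ?_⟩
  · refine .of_comp hi_smooth.continuous (EuclideanSpace.initCLM n).continuous ?_
    simpa [Function.comp_def] using hj_emb
  · have hjx := (hj x).mdifferentiableAt (by simp)
    have hρx := (hρsmooth x).mdifferentiableAt (by simp)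
    dsimp only
    rw [mfderiv_snocCLM_prodMk_apply hjx hρx, mfderiv_snocCLM_prodMk_apply hjx hρx,
      EuclideanSpace.inner_snocCLM, hj_iso]
    exact sub_add_cancel _ _
  · exact hK.preimage_of_le_norm hi_smooth.continuous hρexh fun x =>
      EuclideanSpace.le_norm_snocCLM (j x, ρ x)

/-- Let `(M, g)` be a Riemannian manifold with (possibly nonempty) boundary and
let `ρ : M → ℝ_{>0}` be a smooth exhaustion function with `|∇ρ|_g ≤ 1/2` everywhere (expressed
equivalently as `(dρ(v))² ≤ (1/4) g(v,v)` for all tangent vectors `v`).  Then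
`g̃ := g − dρ ⊗ dρ` is a Riemannian metric on `M`, and for any isometric embedding
`j : (M, g̃) → ℝⁿ`, the map `i = (j, ρ) : M → ℝ^{n+1}` is a proper isometric embedding
of `(M, g)`. -/
theorem proper_embedding_from_exhaustion {m : ℕ} [NeZero m]
    {M : Type} [TopologicalSpace M] [ChartedSpace (EuclideanHalfSpace m) M]
    [IsManifold (𝓡∂ m) (⊤ : ℕ∞) M]
    (g : SmoothRiemannianMetric (𝓡∂ m) M)
    (ρ : M → ℝ)
    (hρsmooth : ContMDiff (𝓡∂ m) 𝓘(ℝ, ℝ) (⊤ : ℕ∞) ρ)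
    (hρpos : ∀ x : M, 0 < ρ x)
    (hρexh : ∀ c : ℝ, IsCompact {x : M | ρ x ≤ c})
    (hρgrad : ∀ (x : M) (v : TangentSpace (𝓡∂ m) x),
      (show ℝ from mfderiv (𝓡∂ m) 𝓘(ℝ, ℝ) ρ x v) ^ 2 ≤ (1 / 4) * g.inner x v v) :
    -- `g̃ = g − dρ ⊗ dρ` is a Riemannian metric:
    ∃ gt : SmoothRiemannianMetric (𝓡∂ m) M,
      (∀ (x : M) (v w : TangentSpace (𝓡∂ m) x),
        gt.inner x v w =
          g.inner x v w - (show ℝ from mfderiv (𝓡∂ m) 𝓘(ℝ, ℝ) ρ x v) *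
            (show ℝ from mfderiv (𝓡∂ m) 𝓘(ℝ, ℝ) ρ x w)) ∧
      -- and for every isometric embedding `j` of `(M, g̃)` into `ℝⁿ`,
      ∀ (n : ℕ) (j : M → EuclideanSpace ℝ (Fin n)),
        ContMDiff (𝓡∂ m) 𝓘(ℝ, EuclideanSpace ℝ (Fin n)) (⊤ : ℕ∞) j →
        Topology.IsEmbedding j →
        (∀ (x : M) (v w : TangentSpace (𝓡∂ m) x),
          ⟪(show EuclideanSpace ℝ (Fin n) from
              mfderiv (𝓡∂ m) 𝓘(ℝ, EuclideanSpace ℝ (Fin n)) j x v),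
            (show EuclideanSpace ℝ (Fin n) from
              mfderiv (𝓡∂ m) 𝓘(ℝ, EuclideanSpace ℝ (Fin n)) j x w)⟫ = gt.inner x v w) →
        -- the map `i = (j, ρ)` is a proper isometric embedding of `(M, g)`:
        ∀ i : M → EuclideanSpace ℝ (Fin (n + 1)),
          (i = fun x => (EuclideanSpace.equiv (Fin (n + 1)) ℝ).symm
              (Fin.snoc (EuclideanSpace.equiv (Fin n) ℝ (j x)) (ρ x))) →
          ContMDiff (𝓡∂ m) 𝓘(ℝ, EuclideanSpace ℝ (Fin (n + 1))) (⊤ : ℕ∞) i ∧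
          Topology.IsEmbedding i ∧
          (∀ (x : M) (v w : TangentSpace (𝓡∂ m) x),
            ⟪(show EuclideanSpace ℝ (Fin (n + 1)) from
                mfderiv (𝓡∂ m) 𝓘(ℝ, EuclideanSpace ℝ (Fin (n + 1))) i x v),
              (show EuclideanSpace ℝ (Fin (n + 1)) from
                mfderiv (𝓡∂ m) 𝓘(ℝ, EuclideanSpace ℝ (Fin (n + 1))) i x w)⟫ = g.inner x v w) ∧
          (∀ K : Set (EuclideanSpace ℝ (Fin (n + 1))), IsCompact K → IsCompact (i ⁻¹' K)) :=
  proper_embedding_from_exhaustion_general g ρ hρsmooth hρexh hρgrad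
end
end
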